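/- The functional K ↦ V(K) · exp(−𝓔(K)/V(B)) is continuous on the space of convex bodies in ℝⁿ equipped with the Hausdorff metric. -/

import Mathlib

open MeasureTheory Metric Real Set
open scoped Pointwise RealInnerProductSpace

noncomputable section

/-- The surface measure `dθ` on the unit sphere `S^{n-1}` of `ℝⁿ`
(its total mass is `n·V(B)`). -/
def sphMeasure (n : ℕ) : Measure (Metric.sphere (0 : EuclideanSpace ℝ (Fin n)) 1) :=
  (volume : Measure (EuclideanSpace ℝ (Fin n))).toSphere

/-- `K` is a convex body: compact, convex, with nonempty interior. -/
def IsConvexBody {n : ℕ} (K : Set (EuclideanSpace ℝ (Fin n))) : Prop :=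
  IsCompact K ∧ Convex ℝ K ∧ (interior K).Nonempty

/-- The support function of `K`: `s_K(u) = max_{x ∈ K} x·u`. -/
def supp {n : ℕ} (K : Set (EuclideanSpace ℝ (Fin n))) (u : EuclideanSpace ℝ (Fin n)) : ℝ :=
  sSup ((fun x => ⟪x, u⟫) '' K)

/-- `n`-dimensional Lebesgue measure (volume), as a real number. -/
def vol {n : ℕ} (K : Set (EuclideanSpace ℝ (Fin n))) : ℝ :=
  (volume K).toReal

/-- The closed unit ball `B` of `ℝⁿ`. -/
def unitBall (n : ℕ) : Set (EuclideanSpace ℝ (Fin n)) :=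
  Metric.closedBall 0 1

/-- The entropy functional `𝓔(K) = sup_{x ∈ int K} ∫_{S^{n-1}} log (s_K(u) - x·u) dθ`. -/
def entropy {n : ℕ} (K : Set (EuclideanSpace ℝ (Fin n))) : ℝ :=
  sSup ((fun x => ∫ u, Real.log (supp K u - ⟪x, (u : EuclideanSpace ℝ (Fin n))⟫)
      ∂(sphMeasure n)) '' interior K)

instance (n : ℕ) : IsFiniteMeasure (sphMeasure n) := by unfold sphMeasure; infer_instance

section Aux

variable {n : ℕ} {K L M : Set (EuclideanSpace ℝ (Fin n))} {R c r ρ : ℝ}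
  {x x0 u v : EuclideanSpace ℝ (Fin n)}

local notation "Eu" => EuclideanSpace ℝ (Fin n)

/-- integrand of the entropy functional -/
def entInt (K : Set (EuclideanSpace ℝ (Fin n))) (x : EuclideanSpace ℝ (Fin n)) : ℝ :=
  ∫ u, Real.log (supp K u - ⟪x, (u : EuclideanSpace ℝ (Fin n))⟫) ∂(sphMeasure n)

lemma entropy_eq (K : Set Eu) : entropy K = sSup (entInt K '' interior K) := rfl

lemma bddAbove_inner_image (hK : IsCompact K) (u : Eu) :
    BddAbove ((fun x => ⟪x, u⟫) '' K) :=
  (hK.image (Continuous.inner continuous_id continuous_const)).bddAbove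

lemma le_supp (hK : IsCompact K) (hx : x ∈ K) (u : Eu) : ⟪x, u⟫ ≤ supp K u :=
  le_csSup (bddAbove_inner_image hK u) ⟨x, hx, rfl⟩

lemma supp_le (hK : K.Nonempty) {u : Eu} {a : ℝ} (h : ∀ x ∈ K, ⟪x, u⟫ ≤ a) :
    supp K u ≤ a :=
  csSup_le (hK.image _) (by rintro t ⟨y, hy, rfl⟩; exact h y hy)

lemma supp_mono (hL : IsCompact L) (hKL : K ⊆ L) (hK : K.Nonempty) (u : Eu) :
    supp K u ≤ supp L u :=
  supp_le hK fun y hy => le_supp hL (hKL hy) u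

lemma supp_le_norm (hK : K.Nonempty) (hR : K ⊆ closedBall 0 R) (u : Eu) :
    supp K u ≤ R * ‖u‖ :=
  supp_le hK fun y hy => (real_inner_le_norm y u).trans
    (mul_le_mul_of_nonneg_right
      (by simpa [mem_closedBall, dist_zero_right] using hR hy) (norm_nonneg u))

lemma abs_supp_le (hK : IsCompact K) (hne : K.Nonempty) (hR : K ⊆ closedBall 0 R)
    {u : Eu} (hu : ‖u‖ = 1) : |supp K u| ≤ R := by
  obtain ⟨y, hy⟩ := hne
  have hyR : ‖y‖ ≤ R := by simpa [mem_closedBall, dist_zero_right] using hR hy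
  have h1 : supp K u ≤ R := by simpa [hu] using supp_le_norm ⟨y, hy⟩ hR u
  have h2 : -R ≤ supp K u := by
    refine le_trans ?_ (le_supp hK hy u)
    have := abs_real_inner_le_norm y u
    rw [hu, mul_one] at this
    have := (abs_le.1 this).1
    linarith
  exact abs_le.2 ⟨h2, h1⟩

lemma supp_sub_le (hKc : IsCompact K) (hK : K.Nonempty) (hR : K ⊆ closedBall 0 R) (u v : Eu) :
    supp K u ≤ supp K v + R * ‖u - v‖ := by
  have hRnn : 0 ≤ R := by
    obtain ⟨y, hy⟩ := hK
    exact (norm_nonneg y).trans (by simpa [mem_closedBall, dist_zero_right] using hR hy)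
  refine supp_le hK fun y hy => ?_
  have h1 : ⟪y, u⟫ = ⟪y, v⟫ + ⟪y, u - v⟫ := by
    rw [← inner_add_right]; congr 1; abel
  have h2 : ⟪y, u - v⟫ ≤ R * ‖u - v‖ :=
    (real_inner_le_norm y (u - v)).trans
      (mul_le_mul_of_nonneg_right
        (by simpa [mem_closedBall, dist_zero_right] using hR hy) (norm_nonneg _))
  have h3 : ⟪y, v⟫ ≤ supp K v := le_supp hKc hy v
  linarith

lemma continuous_supp (hKc : IsCompact K) (hK : K.Nonempty) : Continuous (supp K) := by
  obtain ⟨R, hR⟩ := hKc.isBounded.subset_closedBall 0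
  have hRnn : 0 ≤ R := by
    obtain ⟨y, hy⟩ := hK
    exact (norm_nonneg y).trans (by simpa [mem_closedBall, dist_zero_right] using hR hy)
  have : LipschitzWith (Real.toNNReal R) (supp K) := by
    refine LipschitzWith.of_dist_le_mul fun a b => ?_
    rw [Real.dist_eq, dist_eq_norm, Real.coe_toNNReal R hRnn]
    have h1 := supp_sub_le hKc hK hR a b
    have h2 := supp_sub_le hKc hK hR b a
    rw [norm_sub_rev b a] at h2
    exact abs_sub_le_iff.2 ⟨by linarith, by linarith⟩
  exact this.continuous

lemma supp_sub_ge (hKc : IsCompact K) (hball : closedBall x0 r ⊆ K) (hr : 0 ≤ r)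
    {u : Eu} (hu : ‖u‖ = 1) : ⟪x0, u⟫ + r ≤ supp K u := by
  have hx : x0 + r • u ∈ K := by
    refine hball ?_
    simp [mem_closedBall, dist_self_add_left, norm_smul, hu, abs_of_nonneg hr]
  have := le_supp hKc hx u
  rw [inner_add_left, real_inner_smul_left, real_inner_self_eq_norm_sq, hu] at this
  linarith

lemma exists_closedBall_subset (hx : x ∈ interior K) : ∃ ρ > 0, closedBall x ρ ⊆ K := by
  rcases Metric.isOpen_iff.1 isOpen_interior x hx with ⟨ρ, hρ, hsub⟩
  exact ⟨ρ/2, by positivity,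
    (closedBall_subset_ball (by linarith)).trans (hsub.trans interior_subset)⟩

lemma supp_sub_pos (hKc : IsCompact K) (hx : x ∈ interior K)
    {u : Eu} (hu : ‖u‖ = 1) : 0 < supp K u - ⟪x, u⟫ := by
  obtain ⟨ρ, hρ, hsub⟩ := exists_closedBall_subset hx
  have := supp_sub_ge hKc hsub hρ.le hu
  linarith

lemma continuous_integrand (hKc : IsCompact K) (hK : K.Nonempty)
    (hpos : ∀ w : Metric.sphere (0 : Eu) 1, 0 < supp K (w : Eu) - ⟪x, (w : Eu)⟫) :
    Continuous fun w : Metric.sphere (0 : Eu) 1 =>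
      Real.log (supp K (w : Eu) - ⟪x, (w : Eu)⟫) := by
  have h1 : Continuous fun w : Metric.sphere (0 : Eu) 1 =>
      supp K (w : Eu) - ⟪x, (w : Eu)⟫ :=
    ((continuous_supp hKc hK).comp continuous_subtype_val).sub
      ((Continuous.inner continuous_const continuous_id).comp continuous_subtype_val)
  refine continuous_iff_continuousAt.2 fun w => ?_
  exact ContinuousAt.comp (g := Real.log)
    (f := fun w : Metric.sphere (0 : Eu) 1 => supp K (w : Eu) - ⟪x, (w : Eu)⟫)
    (x := w) (Real.continuousAt_log (hpos w).ne') h1.continuousAt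

lemma integrable_integrand (hKc : IsCompact K) (hK : K.Nonempty)
    (hpos : ∀ w : Metric.sphere (0 : Eu) 1, 0 < supp K (w : Eu) - ⟪x, (w : Eu)⟫) :
    Integrable (fun w : Metric.sphere (0 : Eu) 1 =>
      Real.log (supp K (w : Eu) - ⟪x, (w : Eu)⟫)) (sphMeasure n) :=
  (continuous_integrand hKc hK hpos).integrable_of_hasCompactSupport
    (HasCompactSupport.of_compactSpace _)

lemma sphere_norm_one (w : Metric.sphere (0 : Eu) 1) : ‖(w : Eu)‖ = 1 :=
  mem_sphere_zero_iff_norm.1 w.2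

lemma entInt_le (hKc : IsCompact K) (hR : K ⊆ closedBall 0 R)
    (hx : x ∈ interior K) :
    entInt K x ≤ (sphMeasure n Set.univ).toReal * Real.log (2 * R) := by
  have hK : K.Nonempty := ⟨x, interior_subset hx⟩
  have hxR : ‖x‖ ≤ R := by
    simpa [mem_closedBall, dist_zero_right] using hR (interior_subset hx)
  have hpos : ∀ w : Metric.sphere (0 : Eu) 1, 0 < supp K (w : Eu) - ⟪x, (w : Eu)⟫ :=
    fun w => supp_sub_pos hKc hx (sphere_norm_one w)
  have hub : ∀ w : Metric.sphere (0 : Eu) 1, supp K (w : Eu) - ⟪x, (w : Eu)⟫ ≤ 2 * R := by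
    intro w
    have h1 : supp K (w : Eu) ≤ R := by
      simpa [sphere_norm_one w] using supp_le_norm hK hR (w : Eu)
    have h2 : -R ≤ ⟪x, (w : Eu)⟫ := by
      have := abs_real_inner_le_norm x (w : Eu)
      rw [sphere_norm_one w, mul_one] at this
      linarith [(abs_le.1 this).1]
    linarith
  calc entInt K x ≤ ∫ _ : Metric.sphere (0 : Eu) 1, Real.log (2 * R) ∂(sphMeasure n) := by
        refine integral_mono (integrable_integrand hKc hK hpos) (integrable_const _) ?_
        intro w
        exact Real.log_le_log (hpos w) (hub w)
    _ = (sphMeasure n Set.univ).toReal * Real.log (2 * R) := by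
        rw [integral_const, smul_eq_mul]; rfl

lemma bddAbove_entInt_image (hKc : IsCompact K) (hR : K ⊆ closedBall 0 R) :
    BddAbove (entInt K '' interior K) := by
  refine ⟨(sphMeasure n Set.univ).toReal * Real.log (2 * R), ?_⟩
  rintro t ⟨y, hy, rfl⟩
  exact entInt_le hKc hR hy

lemma entInt_mono (hKc : IsCompact K) (hMc : IsCompact M) (hKM : K ⊆ M)
    (hx : x ∈ interior K) : entInt K x ≤ entInt M x := by
  have hK : K.Nonempty := ⟨x, interior_subset hx⟩
  have hposK : ∀ w : Metric.sphere (0 : Eu) 1, 0 < supp K (w : Eu) - ⟪x, (w : Eu)⟫ :=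
    fun w => supp_sub_pos hKc hx (sphere_norm_one w)
  have hle : ∀ w : Metric.sphere (0 : Eu) 1,
      supp K (w : Eu) - ⟪x, (w : Eu)⟫ ≤ supp M (w : Eu) - ⟪x, (w : Eu)⟫ := by
    intro w
    have := supp_mono hMc hKM hK (w : Eu)
    linarith
  have hposM : ∀ w : Metric.sphere (0 : Eu) 1, 0 < supp M (w : Eu) - ⟪x, (w : Eu)⟫ :=
    fun w => (hposK w).trans_le (hle w)
  refine integral_mono (integrable_integrand hKc hK hposK)
    (integrable_integrand hMc (hK.mono hKM) hposM) fun w => ?_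
  exact Real.log_le_log (hposK w) (hle w)

lemma entropy_mono (hKc : IsCompact K) (hKint : (interior K).Nonempty)
    (hMc : IsCompact M) (hR : M ⊆ closedBall 0 R) (hKM : K ⊆ M) :
    entropy K ≤ entropy M := by
  rw [entropy_eq, entropy_eq]
  refine csSup_le (hKint.image _) ?_
  rintro t ⟨y, hy, rfl⟩
  exact (entInt_mono hKc hMc hKM hy).trans
    (le_csSup (bddAbove_entInt_image hMc hR) ⟨y, interior_mono hKM hy, rfl⟩)

lemma subset_of_supp_le (hMc : IsCompact M) (hMconv : Convex ℝ M) (hMne : M.Nonempty)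
    (hLc : IsCompact L)
    (h : ∀ u : Eu, ‖u‖ = 1 → supp L u ≤ supp M u) : L ⊆ M := by
  intro z hz
  by_contra hzM
  obtain ⟨f, s, hfa, hs⟩ := geometric_hahn_banach_closed_point hMconv hMc.isClosed hzM
  set v : Eu := (InnerProductSpace.toDual ℝ _).symm f with hvdef
  have hv : ∀ y : Eu, ⟪v, y⟫ = f y := fun y => InnerProductSpace.toDual_symm_apply
  have hvne : v ≠ 0 := by
    intro h0
    obtain ⟨y0, hy0⟩ := hMne
    have h1 : f y0 < f z := (hfa y0 hy0).trans hs
    have h2 : f y0 = 0 := by rw [← hv]; simp [h0]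
    have h3 : f z = 0 := by rw [← hv]; simp [h0]
    rw [h2, h3] at h1; exact lt_irrefl _ h1
  set u : Eu := (‖v‖ : ℝ)⁻¹ • v with hudef
  have hu : ‖u‖ = 1 := norm_smul_inv_norm hvne
  have hnv : (0 : ℝ) < ‖v‖ := norm_pos_iff.2 hvne
  have hinner : ∀ y : Eu, ⟪y, u⟫ = ‖v‖⁻¹ * f y := by
    intro y
    rw [hudef, real_inner_smul_right, real_inner_comm, hv]
  have h1 : supp M u ≤ ‖v‖⁻¹ * s := by
    refine supp_le hMne fun y hy => ?_
    rw [hinner y]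
    exact mul_le_mul_of_nonneg_left (hfa y hy).le (inv_nonneg.2 hnv.le)
  have h2 : ⟪z, u⟫ ≤ supp M u := (le_supp hLc hz u).trans (h u hu)
  rw [hinner z] at h2
  have h3 : ‖v‖⁻¹ * s < ‖v‖⁻¹ * f z := by
    exact mul_lt_mul_of_pos_left hs (inv_pos.2 hnv)
  linarith

lemma abs_supp_sub_le_hdist' (hKc : IsCompact K) (hKne : K.Nonempty)
    (hLc : IsCompact L) (hLne : L.Nonempty) (w : Metric.sphere (0 : Eu) 1) :
    |supp K (w : Eu) - supp L (w : Eu)| ≤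
      ⨆ u : Metric.sphere (0 : Eu) 1, |supp K (u : Eu) - supp L (u : Eu)| := by
  obtain ⟨RK, hRK⟩ := hKc.isBounded.subset_closedBall 0
  obtain ⟨RL, hRL⟩ := hLc.isBounded.subset_closedBall 0
  refine le_ciSup (f := fun u : Metric.sphere (0 : Eu) 1 =>
    |supp K (u : Eu) - supp L (u : Eu)|) ⟨RK + RL, ?_⟩ w
  rintro t ⟨u, rfl⟩
  have h1 := abs_supp_le hKc hKne hRK (sphere_norm_one u)
  have h2 := abs_supp_le hLc hLne hRL (sphere_norm_one u)
  calc |supp K (u : Eu) - supp L (u : Eu)| ≤ |supp K (u : Eu)| + |supp L (u : Eu)| :=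
        abs_sub _ _
    _ ≤ RK + RL := add_le_add h1 h2

/-- homothety with center `x0` and ratio `c` -/
def homth (x0 : EuclideanSpace ℝ (Fin n)) (c : ℝ) (S : Set (EuclideanSpace ℝ (Fin n))) :
    Set (EuclideanSpace ℝ (Fin n)) :=
  (fun y => x0 + c • (y - x0)) '' S

lemma homth_eq (x0 : Eu) (c : ℝ) (S : Set Eu) :
    homth x0 c S = (x0 - c • x0) +ᵥ (c • S) := by
  ext z
  constructor
  · rintro ⟨y, hy, rfl⟩
    refine ⟨c • y, ⟨y, hy, rfl⟩, ?_⟩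
    show (x0 - c • x0) + c • y = x0 + c • (y - x0)
    rw [smul_sub]; abel
  · rintro ⟨w, ⟨y, hy, rfl⟩, rfl⟩
    refine ⟨y, hy, ?_⟩
    show x0 + c • (y - x0) = (x0 - c • x0) + c • y
    rw [smul_sub]; abel

lemma homth_continuous (x0 : Eu) (c : ℝ) :
    Continuous fun y : Eu => x0 + c • (y - x0) :=
  continuous_const.add ((continuous_id.sub continuous_const).const_smul c)

lemma homth_isCompact (x0 : Eu) (c : ℝ) (hS : IsCompact S) : IsCompact (homth x0 c S) :=
  hS.image (homth_continuous x0 c)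

lemma homth_convex (x0 : Eu) (c : ℝ) (hS : Convex ℝ S) : Convex ℝ (homth x0 c S) := by
  rw [homth_eq]; exact (hS.smul c).vadd _

lemma homth_nonempty (x0 : Eu) (c : ℝ) (hS : S.Nonempty) : (homth x0 c S).Nonempty :=
  hS.image _

lemma interior_homth (x0 : Eu) {c : ℝ} (hc : c ≠ 0) (S : Set Eu) :
    interior (homth x0 c S) = homth x0 c (interior S) := by
  rw [homth_eq, homth_eq]
  have h1 : interior ((x0 - c • x0) +ᵥ (c • S)) = (x0 - c • x0) +ᵥ interior (c • S) :=
    ((Homeomorph.addLeft (x0 - c • x0)).image_interior (c • S)).symm ▸ rfl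
  rw [h1, interior_smul₀ hc]

lemma volume_homth (x0 : Eu) (c : ℝ) (S : Set Eu) :
    volume (homth x0 c S) = ENNReal.ofReal |c ^ n| * volume S := by
  rw [homth_eq, measure_vadd, Measure.addHaar_smul, finrank_euclideanSpace_fin]

lemma vol_homth (x0 : Eu) {c : ℝ} (hc : 0 ≤ c) (hS : IsCompact S) :
    vol (homth x0 c S) = c ^ n * vol S := by
  rw [vol, vol, volume_homth, ENNReal.toReal_mul, ENNReal.toReal_ofReal (abs_nonneg _),
    abs_of_nonneg (pow_nonneg hc n)]

lemma supp_homth (hS : IsCompact S) (hSne : S.Nonempty) (x0 : Eu) {c : ℝ} (hc : 0 < c)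
    (u : Eu) : supp (homth x0 c S) u = ⟪x0, u⟫ + c * (supp S u - ⟪x0, u⟫) := by
  have himg : (fun y => ⟪y, u⟫) '' (homth x0 c S)
      = (fun t => ⟪x0, u⟫ + c * (t - ⟪x0, u⟫)) '' ((fun y => ⟪y, u⟫) '' S) := by
    rw [homth, image_image, image_image]
    refine image_congr fun y _ => ?_
    simp only [inner_add_left, real_inner_smul_left, inner_sub_left]
    try ring
  have hmono : Monotone fun t : ℝ => ⟪x0, u⟫ + c * (t - ⟪x0, u⟫) := fun a b hab => by
    have := mul_le_mul_of_nonneg_left (sub_le_sub_right hab (⟪x0, u⟫ : ℝ)) hc.le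
    dsimp only; linarith
  have hcont : ContinuousAt (fun t : ℝ => ⟪x0, u⟫ + c * (t - ⟪x0, u⟫))
      (sSup ((fun y => ⟪y, u⟫) '' S)) := by fun_prop
  rw [supp, himg, ← Monotone.map_csSup_of_continuousAt hcont hmono (hSne.image _)
    (bddAbove_inner_image hS u)]
  rfl

lemma entInt_homth (hS : IsCompact S) (hSne : S.Nonempty) (x0 : Eu) {c : ℝ} (hc : 0 < c)
    (hx : x ∈ interior S) :
    entInt (homth x0 c S) (x0 + c • (x - x0))
      = (sphMeasure n Set.univ).toReal * Real.log c + entInt S x := by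
  have hpos : ∀ w : Metric.sphere (0 : Eu) 1, 0 < supp S (w : Eu) - ⟪x, (w : Eu)⟫ :=
    fun w => supp_sub_pos hS hx (sphere_norm_one w)
  have hint : ∀ w : Metric.sphere (0 : Eu) 1,
      supp (homth x0 c S) (w : Eu) - ⟪x0 + c • (x - x0), (w : Eu)⟫
        = c * (supp S (w : Eu) - ⟪x, (w : Eu)⟫) := by
    intro w
    rw [supp_homth hS hSne x0 hc]
    simp only [inner_add_left, real_inner_smul_left, inner_sub_left]
    ring
  have hlog : ∀ w : Metric.sphere (0 : Eu) 1,
      Real.log (supp (homth x0 c S) (w : Eu) - ⟪x0 + c • (x - x0), (w : Eu)⟫)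
        = Real.log c + Real.log (supp S (w : Eu) - ⟪x, (w : Eu)⟫) := by
    intro w
    rw [hint w, Real.log_mul hc.ne' (hpos w).ne']
  rw [entInt]
  rw [integral_congr_ae (Filter.Eventually.of_forall hlog)]
  rw [integral_add (integrable_const _) (integrable_integrand hS hSne hpos)]
  rw [integral_const, smul_eq_mul, entInt]; rfl

lemma entropy_homth (hS : IsCompact S) (hSint : (interior S).Nonempty)
    (x0 : Eu) {c : ℝ} (hc : 0 < c) :
    entropy (homth x0 c S)
      = (sphMeasure n Set.univ).toReal * Real.log c + entropy S := by
  have hSne : S.Nonempty := hSint.mono interior_subset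
  have himg : entInt (homth x0 c S) '' interior (homth x0 c S)
      = (fun t => (sphMeasure n Set.univ).toReal * Real.log c + t)
          '' (entInt S '' interior S) := by
    rw [interior_homth x0 hc.ne' S]
    simp only [homth, image_image]
    exact image_congr fun y hy => entInt_homth hS hSne x0 hc hy
  obtain ⟨Rp, hRp⟩ := hS.isBounded.subset_closedBall 0
  have hbdd : BddAbove (entInt S '' interior S) := bddAbove_entInt_image hS hRp
  have hmono : Monotone fun t : ℝ => (sphMeasure n Set.univ).toReal * Real.log c + t :=
    fun a b hab => by dsimp only; linarith
  have hcont : ContinuousAt (fun t : ℝ => (sphMeasure n Set.univ).toReal * Real.log c + t)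
      (sSup (entInt S '' interior S)) := by fun_prop
  rw [entropy_eq, himg, ← Monotone.map_csSup_of_continuousAt hcont hmono
    (hSint.image _) hbdd, entropy_eq]

end Aux

/-- The `p`-entropy functional `𝓔_p(K) = inf_{x ∈ int K} ∫_{S^{n-1}} (s_K(u) - x·u)^p dθ`. -/
def entropyP {n : ℕ} (p : ℝ) (K : Set (EuclideanSpace ℝ (Fin n))) : ℝ :=
  sInf ((fun x => ∫ u, (supp K u - ⟪x, (u : EuclideanSpace ℝ (Fin n))⟫) ^ p
      ∂(sphMeasure n)) '' interior K)

/-- The Hausdorff distance between convex bodies,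
`δ_H(K,L) = sup_{u ∈ S^{n-1}} |s_K(u) - s_L(u)|`. -/
def hdist {n : ℕ} (K L : Set (EuclideanSpace ℝ (Fin n))) : ℝ :=
  ⨆ u : Metric.sphere (0 : EuclideanSpace ℝ (Fin n)) 1, |supp K u - supp L u|

set_option maxHeartbeats 1000000 in
/-- The functional `K ↦ V(K)·exp(-𝓔(K)/V(B))` is continuous on the
space of convex bodies equipped with the Hausdorff metric. -/
theorem statement12 (n : ℕ) (hn : 1 ≤ n) :
    ∀ K : Set (EuclideanSpace ℝ (Fin n)), IsConvexBody K →
      ∀ ε : ℝ, 0 < ε →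
        ∃ δ : ℝ, 0 < δ ∧
          ∀ L : Set (EuclideanSpace ℝ (Fin n)), IsConvexBody L →
            hdist K L < δ →
            |vol L * Real.exp (-entropy L / vol (unitBall n))
              - vol K * Real.exp (-entropy K / vol (unitBall n))| < ε := by
  intro K hK ε hε
  obtain ⟨hKc, hKconv, hKint⟩ := hK
  obtain ⟨x1, hx1⟩ := hKint
  obtain ⟨r, hr, hball⟩ := exists_closedBall_subset hx1
  have hKint' : (interior K).Nonempty := ⟨x1, hx1⟩
  have hKne : K.Nonempty := ⟨x1, interior_subset hx1⟩
  set m := (sphMeasure n Set.univ).toReal with hm_def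
  have hm : 0 ≤ m := ENNReal.toReal_nonneg
  set vB := vol (unitBall n) with hvB_def
  have hvB : 0 < vB := by
    rw [hvB_def, vol, unitBall]
    refine ENNReal.toReal_pos ?_ (isCompact_closedBall 0 1).measure_lt_top.ne
    refine (lt_of_lt_of_le (measure_ball_pos volume 0 one_pos) (measure_mono ball_subset_closedBall)).ne'
  set C := (n : ℝ) + m / vB with hC_def
  have hC : 0 < C := by
    have h1 : (1:ℝ) ≤ (n:ℝ) := by exact_mod_cast hn
    have h2 : 0 ≤ m / vB := div_nonneg hm hvB.le
    rw [hC_def]; linarith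
  set FK := vol K * Real.exp (-entropy K / vB) with hFK_def
  have hFK0 : 0 ≤ FK := mul_nonneg ENNReal.toReal_nonneg (Real.exp_pos _).le
  set ε' := min 1 (ε / (2 * FK + 2)) with hε'_def
  have hε'pos : 0 < ε' := lt_min one_pos (div_pos hε (by linarith))
  have hε'le1 : ε' ≤ 1 := min_le_left _ _
  set t := min (Real.exp (Real.log (1 + ε') / C) - 1) (1/2) with ht_def
  have htpos : 0 < t := by
    refine lt_min ?_ (by norm_num)
    have h1 : 0 < Real.log (1 + ε') := Real.log_pos (by linarith)
    have h2 : (1:ℝ) < Real.exp (Real.log (1 + ε') / C) := by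
      nlinarith [Real.add_one_le_exp (Real.log (1 + ε') / C), div_pos h1 hC]
    linarith
  have ht12 : t ≤ 1/2 := min_le_right _ _
  set lgt := Real.log (1 + t) with hlgt_def
  have hlgt0 : 0 ≤ lgt := Real.log_nonneg (by linarith)
  have hkey : C * lgt ≤ Real.log (1 + ε') := by
    have h1 : 1 + t ≤ Real.exp (Real.log (1 + ε') / C) := by
      have := min_le_left (Real.exp (Real.log (1 + ε') / C) - 1) (1/2 : ℝ)
      rw [← ht_def] at this
      linarith
    have h2 : lgt ≤ Real.log (1 + ε') / C :=
      (Real.log_le_log (by linarith) h1).trans_eq (Real.log_exp _)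
    calc C * lgt ≤ C * (Real.log (1 + ε') / C) := mul_le_mul_of_nonneg_left h2 hC.le
      _ = Real.log (1 + ε') := by field_simp
  refine ⟨t * r / 2, by positivity, ?_⟩
  intro L hL hd
  obtain ⟨hLc, hLconv, hLint⟩ := hL
  have hLne : L.Nonempty := hLint.mono interior_subset
  set δ := t * r / 2 with hδ_def
  have hδpos : 0 < δ := by positivity
  have hδr4 : δ ≤ r / 4 := by rw [hδ_def]; nlinarith
  have hrδ : 0 < r - δ := by linarith
  unfold hdist at hd
  have hsupp : ∀ u : EuclideanSpace ℝ (Fin n), ‖u‖ = 1 → |supp K u - supp L u| < δ := by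
    intro u hu
    exact (abs_supp_sub_le_hdist' hKc hKne hLc hLne
      ⟨u, mem_sphere_zero_iff_norm.2 hu⟩).trans_lt hd
  set μ1 := 1 + δ / r with hμ1
  set μ2 := 1 + δ / (r - δ) with hμ2
  have hμ1pos : 0 < μ1 := by rw [hμ1]; positivity
  have hμ2pos : 0 < μ2 := by rw [hμ2]; positivity
  have hμ1le : μ1 ≤ 1 + t := by
    rw [hμ1]
    have h1 : δ / r ≤ t := by
      rw [div_le_iff₀ hr, hδ_def]; nlinarith
    linarith
  have hμ2le : μ2 ≤ 1 + t := by
    rw [hμ2]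
    have h1 : δ / (r - δ) ≤ t := by
      rw [div_le_iff₀ hrδ, hδ_def]
      nlinarith [ht12, htpos, hδr4, hr]
    linarith
  set K1 := homth x1 μ1 K with hK1_def
  have hK1c : IsCompact K1 := homth_isCompact x1 μ1 hKc
  have hLsubK1 : L ⊆ K1 := by
    refine subset_of_supp_le hK1c (homth_convex x1 μ1 hKconv)
      (homth_nonempty x1 μ1 hKne) hLc fun u hu => ?_
    have h1 := supp_homth hKc hKne x1 hμ1pos u
    have h2 := supp_sub_ge hKc hball hr.le hu
    have h3 := (abs_lt.1 (hsupp u hu)).1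
    have h4 : δ / r * r = δ := div_mul_cancel₀ δ hr.ne'
    have h5 : δ / r * r ≤ δ / r * (supp K u - ⟪x1, u⟫) :=
      mul_le_mul_of_nonneg_left (by linarith) (div_nonneg hδpos.le hr.le)
    rw [hK1_def, h1, hμ1]
    have hexp : ⟪x1, u⟫ + (1 + δ / r) * (supp K u - ⟪x1, u⟫)
        = supp K u + δ / r * (supp K u - ⟪x1, u⟫) := by ring
    rw [hexp]
    linarith
  set L1 := homth x1 μ2 L with hL1_def
  have hL1c : IsCompact L1 := homth_isCompact x1 μ2 hLc
  have hKsubL1 : K ⊆ L1 := by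
    refine subset_of_supp_le hL1c (homth_convex x1 μ2 hLconv)
      (homth_nonempty x1 μ2 hLne) hKc fun u hu => ?_
    have h1 := supp_homth hLc hLne x1 hμ2pos u
    have h2 := supp_sub_ge hKc hball hr.le hu
    have habs := abs_lt.1 (hsupp u hu)
    have h4 : δ / (r - δ) * (r - δ) = δ := div_mul_cancel₀ δ hrδ.ne'
    have h5 : δ / (r - δ) * (r - δ) ≤ δ / (r - δ) * (supp L u - ⟪x1, u⟫) :=
      mul_le_mul_of_nonneg_left (by linarith [habs.2]) (div_nonneg hδpos.le hrδ.le)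
    rw [hL1_def, h1, hμ2]
    have hexp : ⟪x1, u⟫ + (1 + δ / (r - δ)) * (supp L u - ⟪x1, u⟫)
        = supp L u + δ / (r - δ) * (supp L u - ⟪x1, u⟫) := by ring
    rw [hexp]
    linarith [habs.2]
  obtain ⟨R1, hR1⟩ := hK1c.isBounded.subset_closedBall 0
  obtain ⟨R2, hR2⟩ := hL1c.isBounded.subset_closedBall 0
  have hvolL : vol L ≤ μ1 ^ n * vol K :=
    (ENNReal.toReal_mono hK1c.measure_lt_top.ne (measure_mono hLsubK1)).trans
      (le_of_eq (vol_homth x1 hμ1pos.le hKc))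
  have hvolK : vol K ≤ μ2 ^ n * vol L :=
    (ENNReal.toReal_mono hL1c.measure_lt_top.ne (measure_mono hKsubL1)).trans
      (le_of_eq (vol_homth x1 hμ2pos.le hLc))
  have hentL : entropy L ≤ m * Real.log μ1 + entropy K :=
    (entropy_mono hLc hLint hK1c hR1 hLsubK1).trans
      (le_of_eq (entropy_homth hKc hKint' x1 hμ1pos))
  have hentK : entropy K ≤ m * Real.log μ2 + entropy L :=
    (entropy_mono hKc hKint' hL1c hR2 hKsubL1).trans
      (le_of_eq (entropy_homth hLc hLint x1 hμ2pos))
  have hlogμ1 : Real.log μ1 ≤ lgt := Real.log_le_log hμ1pos hμ1le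
  have hlogμ2 : Real.log μ2 ≤ lgt := Real.log_le_log hμ2pos hμ2le
  have hμpow1 : μ1 ^ n ≤ (1 + t) ^ n := pow_le_pow_left₀ hμ1pos.le hμ1le n
  have hμpow2 : μ2 ^ n ≤ (1 + t) ^ n := pow_le_pow_left₀ hμ2pos.le hμ2le n
  have hexp_eq : ((1 + t) ^ n : ℝ) * Real.exp (m * lgt / vB) = Real.exp (C * lgt) := by
    have h1 : (1 + t : ℝ) = Real.exp lgt := (Real.exp_log (by linarith)).symm
    rw [h1, ← Real.exp_nat_mul, ← Real.exp_add]
    congr 1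
    rw [hC_def]
    field_simp
  set FL := vol L * Real.exp (-entropy L / vB) with hFL_def
  have hFL0 : 0 ≤ FL := mul_nonneg ENNReal.toReal_nonneg (Real.exp_pos _).le
  have hvolK0 : 0 ≤ vol K := ENNReal.toReal_nonneg
  have hvolL0 : 0 ≤ vol L := ENNReal.toReal_nonneg
  have hup : FL ≤ FK * Real.exp (C * lgt) := by
    have h1 : vol L ≤ (1 + t) ^ n * vol K :=
      hvolL.trans (mul_le_mul_of_nonneg_right hμpow1 hvolK0)
    have h2 : -entropy L / vB ≤ (-entropy K + m * lgt) / vB := by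
      have hmm : m * Real.log μ2 ≤ m * lgt := mul_le_mul_of_nonneg_left hlogμ2 hm
      exact (div_le_div_iff_of_pos_right hvB).2 (by linarith)
    calc FL = vol L * Real.exp (-entropy L / vB) := hFL_def
      _ ≤ ((1 + t) ^ n * vol K) * Real.exp ((-entropy K + m * lgt) / vB) :=
          mul_le_mul h1 (Real.exp_le_exp.2 h2) (Real.exp_pos _).le (by positivity)
      _ = FK * ((1 + t) ^ n * Real.exp (m * lgt / vB)) := by
          rw [hFK_def, add_div, Real.exp_add]; ring
      _ = FK * Real.exp (C * lgt) := by rw [hexp_eq]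
  have hup' : FK ≤ FL * Real.exp (C * lgt) := by
    have h1 : vol K ≤ (1 + t) ^ n * vol L :=
      hvolK.trans (mul_le_mul_of_nonneg_right hμpow2 hvolL0)
    have h2 : -entropy K / vB ≤ (-entropy L + m * lgt) / vB := by
      have hmm : m * Real.log μ1 ≤ m * lgt := mul_le_mul_of_nonneg_left hlogμ1 hm
      exact (div_le_div_iff_of_pos_right hvB).2 (by linarith)
    calc FK = vol K * Real.exp (-entropy K / vB) := hFK_def
      _ ≤ ((1 + t) ^ n * vol L) * Real.exp ((-entropy L + m * lgt) / vB) :=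
          mul_le_mul h1 (Real.exp_le_exp.2 h2) (Real.exp_pos _).le (by positivity)
      _ = FL * ((1 + t) ^ n * Real.exp (m * lgt / vB)) := by
          rw [hFL_def, add_div, Real.exp_add]; ring
      _ = FL * Real.exp (C * lgt) := by rw [hexp_eq]
  have hA1 : Real.exp (C * lgt) ≤ 1 + ε' :=
    (Real.exp_le_exp.2 hkey).trans_eq (Real.exp_log (by linarith))
  have hups : FL ≤ FK * (1 + ε') :=
    hup.trans (mul_le_mul_of_nonneg_left hA1 hFK0)
  have hdowns : FK - FL ≤ FL * ε' := by
    have := hup'.trans (mul_le_mul_of_nonneg_left hA1 hFL0)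
    nlinarith
  have hFLle : FL ≤ 2 * FK := by nlinarith
  have hεbound : 2 * FK * ε' < ε := by
    have h1 : ε' ≤ ε / (2 * FK + 2) := min_le_right _ _
    have h2 : 2 * FK * ε' ≤ 2 * FK * (ε / (2 * FK + 2)) :=
      mul_le_mul_of_nonneg_left h1 (by linarith)
    have h3 : 2 * FK / (2 * FK + 2) < 1 := (div_lt_one (by linarith)).2 (by linarith)
    have h4 : 2 * FK * (ε / (2 * FK + 2)) < ε := by
      calc 2 * FK * (ε / (2 * FK + 2)) = (2 * FK / (2 * FK + 2)) * ε := by ring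
        _ < 1 * ε := mul_lt_mul_of_pos_right h3 hε
        _ = ε := one_mul ε
    linarith
  have hp : 0 ≤ FK * ε' := mul_nonneg hFK0 hε'pos.le
  have hr1 : FK * (1 + ε') = FK + FK * ε' := by ring
  have hr2 : 2 * FK * ε' = 2 * (FK * ε') := by ring
  have hr3 : FL * ε' ≤ 2 * FK * ε' := mul_le_mul_of_nonneg_right hFLle hε'pos.le
  rw [abs_sub_lt_iff]
  constructor
  · linarith
  · linarith
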